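/- Let k ≥ 3, b_k = 2^{k-1} - a_{k-2} + 1, and 0 ≤ u ≤ 2^{k-1} - b_k. Then lc(B_{b_k + u}) = lc(B_{a_{k-1} + u}) and lc(B_{2^k - (b_k + u)}) = lc(B_{a_{k-1} + u}), where lc denotes the leading coefficient of the Stern polynomial. -/

import Mathlib

open Polynomial in
/-- The Stern polynomial: `B 0 = 0`, `B 1 = 1`, `B (2n) = t * B n`, `B (2n+1) = B n + B (n+1)`. -/
noncomputable def sternP : ℕ → Polynomial ℕ
  | 0 => 0
  | 1 => 1
  | n + 2 =>
    if (n + 2) % 2 = 0 then X * sternP (n / 2 + 1)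
    else sternP (n / 2 + 1) + sternP (n / 2 + 2)
decreasing_by all_goals omega

/-- The digits of a BSD representation lie in {-1, 0, 1}. -/
def IsBSDDigits {i : ℕ} (b : Fin i → ℤ) : Prop := ∀ j, b j ∈ ({-1, 0, 1} : Set ℤ)

/-- The value represented by the digit string `b` (least significant digit `b 0`). -/
def bsdVal {i : ℕ} (b : Fin i → ℤ) : ℤ := ∑ j : Fin i, b j * 2 ^ (j : ℕ)

/-- `b` is a (not necessarily reduced) non-adjacent form digit string of length `k`:
digits in {-1,0,1}, no two adjacent digits both nonzero, and nonzero leading digit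
(when `k > 0`). -/
def IsReducedNAF {k : ℕ} (b : Fin k → ℤ) : Prop :=
  IsBSDDigits b ∧
  (∀ j : Fin k, ∀ h : (j : ℕ) + 1 < k, b j = 0 ∨ b ⟨(j : ℕ) + 1, h⟩ = 0) ∧
  (∀ h : 0 < k, b ⟨k - 1, Nat.sub_lt h one_pos⟩ ≠ 0)

/-- `m` has a reduced NAF representation of bitlength `k`. -/
def HasNAFLen (m : ℤ) (k : ℕ) : Prop :=
  ∃ b : Fin k → ℤ, IsReducedNAF b ∧ bsdVal b = m

/-- `I k`: the set of positive integers of NAF-bitlength `k`. -/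
def NAFInterval (k : ℕ) : Set ℕ := {n : ℕ | HasNAFLen (n : ℤ) k}

/-- `a k = min I k`: `a 1 = 1`, `a 2 = 2`, `a k = 2^(k-2) + a (k-2)`. -/
def aseq : ℕ → ℕ
  | 0 => 0
  | 1 => 1
  | 2 => 2
  | k + 3 => 2 ^ (k + 1) + aseq (k + 1)

/-- The NAF-bitlength of `n`. -/
noncomputable def nafLen (n : ℕ) : ℕ := sInf {k : ℕ | HasNAFLen (n : ℤ) k}

/-- The minimal Hamming weight of a BSD representation of `n` of length
equal to its NAF-bitlength. -/
noncomputable def minWeight (n : ℕ) : ℕ :=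
  sInf {w : ℕ | ∃ b : Fin (nafLen n) → ℤ,
    IsBSDDigits b ∧ bsdVal b = (n : ℤ) ∧ {j | b j ≠ 0}.ncard = w}

/-- `Z n`: the number of zeros in an optimal (minimal-weight) BSD representation of `n`
of length equal to its NAF-bitlength. -/
noncomputable def Zfun (n : ℕ) : ℕ := nafLen n - minWeight n

/-- `M n`: the number of optimal (minimal-weight) BSD representations of `n`
of length equal to its NAF-bitlength. -/
noncomputable def Mfun (n : ℕ) : ℕ :=
  {b : Fin (nafLen n) → ℤ |
    IsBSDDigits b ∧ bsdVal b = (n : ℤ) ∧ {j | b j ≠ 0}.ncard = minWeight n}.ncard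


/-!
Put `m = a_{k-2} - 1 - u`. The indices in the statement are then `2^{k-1} - m`, `2^{k-1} + m`
and `a_{k-1} + u = 2^{k-2} - m`, so both claims follow once `B_p - t·B_c` has degree at most
`deg B_c` for `c = 2^{k-2} - m` and `p = 2^{k-1} ∓ m`. Such a bound propagates from `(p, c)` to
`(2p, 2c)`, and to `(2p+1, 2c+1)` from the pairs `(p, c), (p+1, c+1)` or the crossed pairs
`(p, c+1), (p+1, c)`; this gives an induction on `k` that halves `m`. For `2^{k-1} + m` the
crossed step at the top of the range also needs
`deg B_{2^{k-1} + a_{k-2}} ≤ deg B_{2^{k-2} - a_{k-2}} + 1` and the fact that `deg B`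
increases by one from `2^{k-2} - a_{k-2}` (binary `1010…`) to its successor exactly when `k`
is odd.
-/

open Polynomial

lemma Polynomial.natDegree_add_eq_max_of_canonicallyOrdered {R : Type*} [Semiring R]
    [PartialOrder R] [CanonicallyOrderedAdd R] (p q : R[X]) :
    (p + q).natDegree = max p.natDegree q.natDegree := by
  have left_le : ∀ p q : R[X], p.natDegree ≤ (p + q).natDegree := by
    intro p q
    rcases eq_or_ne p 0 with rfl | hp
    · simp
    refine le_natDegree_of_ne_zero ?_
    rw [coeff_add]
    exact fun h => hp (leadingCoeff_eq_zero.mp (add_eq_zero.mp h).1)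
  exact le_antisymm (natDegree_add_le p q) (max_le (left_le p q) (add_comm q p ▸ left_le q p))

lemma Polynomial.natDegree_X_mul_le {R : Type*} [Semiring R] (p : R[X]) :
    (X * p).natDegree ≤ p.natDegree + 1 :=
  natDegree_mul_le.trans (by have := natDegree_X_le (R := R); omega)

lemma sternP_two_mul (n : ℕ) : sternP (2 * n) = X * sternP n := by
  rcases n with _ | n
  · simp [sternP]
  · rw [show 2 * (n + 1) = 2 * n + 2 by ring, sternP, if_pos (by omega),
      show 2 * n / 2 + 1 = n + 1 by omega]

lemma sternP_two_mul_add_one (n : ℕ) : sternP (2 * n + 1) = sternP n + sternP (n + 1) := by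
  rcases n with _ | n
  · simp [sternP]
  · rw [show 2 * (n + 1) + 1 = (2 * n + 1) + 2 by ring, sternP, if_neg (by omega),
      show (2 * n + 1) / 2 + 1 = n + 1 by omega, show (2 * n + 1) / 2 + 2 = n + 2 by omega]

lemma eval_one_sternP_pos {n : ℕ} (hn : n ≠ 0) : 0 < (sternP n).eval 1 := by
  induction n using Nat.strong_induction_on with
  | _ n ih =>
    rcases eq_or_ne n 1 with rfl | hn1
    · simp [sternP]
    obtain ⟨k, rfl | rfl⟩ := Nat.even_or_odd' n
    · simpa [sternP_two_mul] using ih k (by omega) (by omega)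
    · have := ih (k + 1) (by omega) (by omega)
      rw [sternP_two_mul_add_one, eval_add]
      omega

lemma sternP_ne_zero {n : ℕ} (hn : n ≠ 0) : sternP n ≠ 0 := fun h => by
  simpa [h] using eval_one_sternP_pos hn

lemma natDegree_sternP_two_mul {n : ℕ} (hn : n ≠ 0) :
    (sternP (2 * n)).natDegree = (sternP n).natDegree + 1 := by
  rw [sternP_two_mul, natDegree_X_mul (sternP_ne_zero hn)]

lemma natDegree_sternP_two_mul_add_one (n : ℕ) :
    (sternP (2 * n + 1)).natDegree = max (sternP n).natDegree (sternP (n + 1)).natDegree := by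
  rw [sternP_two_mul_add_one, natDegree_add_eq_max_of_canonicallyOrdered]

lemma aseq_add_two_add_mod_two (n : ℕ) : aseq (n + 2) + n % 2 = 2 * aseq (n + 1) := by
  induction n using Nat.twoStepInduction with
  | zero => rfl
  | one => rfl
  | more n ih _ =>
    rw [show aseq (n + 4) = 2 ^ (n + 2) + aseq (n + 2) from rfl,
      show aseq (n + 3) = 2 ^ (n + 1) + aseq (n + 1) from rfl, pow_succ 2 (n + 1)]
    omega

lemma aseq_add_one_add_aseq_add_two (n : ℕ) : aseq (n + 1) + aseq (n + 2) = 2 ^ (n + 1) + 1 := by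
  induction n with
  | zero => rfl
  | succ n ih =>
    show aseq (n + 2) + aseq (n + 3) = 2 ^ (n + 2) + 1
    rw [show aseq (n + 3) = 2 ^ (n + 1) + aseq (n + 1) from rfl, pow_succ 2 (n + 1)]
    omega

-- Taken in `ℤ[X]`: subtraction in `ℕ[X]` would truncate.
noncomputable def sternDiff (p c : ℕ) : ℤ[X] :=
  (sternP p).map (Nat.castRingHom ℤ) - X * (sternP c).map (Nat.castRingHom ℤ)

lemma sternDiff_two_mul (p c : ℕ) : sternDiff (2 * p) (2 * c) = X * sternDiff p c := by
  simp only [sternDiff, sternP_two_mul, Polynomial.map_mul, map_X]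
  ring

lemma sternDiff_two_mul_add_one (p c : ℕ) :
    sternDiff (2 * p + 1) (2 * c + 1) = sternDiff p c + sternDiff (p + 1) (c + 1) := by
  simp only [sternDiff, sternP_two_mul_add_one, Polynomial.map_add]
  ring

lemma sternDiff_two_mul_add_one_eq_add_swap (p c : ℕ) :
    sternDiff (2 * p + 1) (2 * c + 1) = sternDiff p (c + 1) + sternDiff (p + 1) c := by
  simp only [sternDiff, sternP_two_mul_add_one, Polynomial.map_add]
  ring

lemma natDegree_sternP_le_natDegree_sternDiff (p c : ℕ) :
    (sternP p).natDegree ≤ max (sternDiff p c).natDegree ((sternP c).natDegree + 1) := by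
  have hp : (sternP p).map (Nat.castRingHom ℤ)
      = sternDiff p c + X * (sternP c).map (Nat.castRingHom ℤ) := by
    rw [sternDiff, sub_add_cancel]
  rw [← natDegree_map_eq_of_injective (Nat.castRingHom ℤ).injective_nat (sternP p), hp,
    ← natDegree_map_eq_of_injective (Nat.castRingHom ℤ).injective_nat (sternP c)]
  exact (natDegree_add_le _ _).trans (max_le_max le_rfl (natDegree_X_mul_le _))

lemma natDegree_sternDiff_le (p c : ℕ) :
    (sternDiff p c).natDegree ≤ max (sternP p).natDegree ((sternP c).natDegree + 1) := by
  rw [sternDiff, ← natDegree_map_eq_of_injective (Nat.castRingHom ℤ).injective_nat (sternP p),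
    ← natDegree_map_eq_of_injective (Nat.castRingHom ℤ).injective_nat (sternP c)]
  exact (natDegree_sub_le _ _).trans (max_le_max le_rfl (natDegree_X_mul_le _))

lemma leadingCoeff_sternP_eq_of_natDegree_sternDiff_le {p c : ℕ} (hc : c ≠ 0)
    (h : (sternDiff p c).natDegree ≤ (sternP c).natDegree) :
    (sternP p).leadingCoeff = (sternP c).leadingCoeff := by
  set Bc := (sternP c).map (Nat.castRingHom ℤ)
  have hBc : Bc ≠ 0 :=
    (Polynomial.map_ne_zero_iff (Nat.castRingHom ℤ).injective_nat).mpr (sternP_ne_zero hc)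
  have hlt : (sternDiff p c).degree < (X * Bc).degree := by
    refine degree_lt_degree ?_
    rw [natDegree_X_mul hBc, natDegree_map_eq_of_injective (Nat.castRingHom ℤ).injective_nat]
    omega
  have hlc := leadingCoeff_add_of_degree_lt hlt
  rw [sternDiff, sub_add_cancel, X_mul, leadingCoeff_mul_X,
    leadingCoeff_map_of_injective (Nat.castRingHom ℤ).injective_nat,
    leadingCoeff_map_of_injective (Nat.castRingHom ℤ).injective_nat] at hlc
  exact Nat.cast_injective hlc

lemma natDegree_sternDiff_two_mul_le {p c : ℕ} (hc : c ≠ 0)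
    (h : (sternDiff p c).natDegree ≤ (sternP c).natDegree) :
    (sternDiff (2 * p) (2 * c)).natDegree ≤ (sternP (2 * c)).natDegree := by
  rw [sternDiff_two_mul, natDegree_sternP_two_mul hc]
  exact (natDegree_X_mul_le _).trans (by omega)

lemma natDegree_sternDiff_two_mul_add_one_le {p c : ℕ}
    (h₀ : (sternDiff p c).natDegree ≤ (sternP c).natDegree)
    (h₁ : (sternDiff (p + 1) (c + 1)).natDegree ≤ (sternP (c + 1)).natDegree) :
    (sternDiff (2 * p + 1) (2 * c + 1)).natDegree ≤ (sternP (2 * c + 1)).natDegree := by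
  rw [sternDiff_two_mul_add_one, natDegree_sternP_two_mul_add_one]
  exact (natDegree_add_le _ _).trans (max_le_max h₀ h₁)

lemma natDegree_sternDiff_two_pow_sub_le (n : ℕ) : ∀ m ≤ aseq (n + 1),
    (sternDiff (2 ^ (n + 2) - m) (2 ^ (n + 1) - m)).natDegree
      ≤ (sternP (2 ^ (n + 1) - m)).natDegree := by
  induction n with
  | zero =>
    have h21 : sternDiff 2 1 = 0 := by
      rw [sternDiff, show 2 = 2 * 1 from rfl, sternP_two_mul, Polynomial.map_mul, map_X, sub_self]
    intro m (hm : m ≤ 1)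
    interval_cases m
    · rw [show 2 ^ (0 + 2) - 0 = 2 * 2 by norm_num, show 2 ^ (0 + 1) - 0 = 2 * 1 by norm_num]
      exact natDegree_sternDiff_two_mul_le one_ne_zero (by simp [h21])
    · rw [show 2 ^ (0 + 2) - 1 = 2 * 1 + 1 by norm_num,
        show 2 ^ (0 + 1) - 1 = 2 * 0 + 1 by norm_num]
      exact natDegree_sternDiff_two_mul_add_one_le (by simp [sternDiff, sternP]) (by simp [h21])
  | succ n ih =>
    show ∀ m ≤ aseq (n + 2), (sternDiff (2 ^ (n + 3) - m) (2 ^ (n + 2) - m)).natDegree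
      ≤ (sternP (2 ^ (n + 2) - m)).natDegree
    intro m hm
    have := aseq_add_two_add_mod_two n
    have := aseq_add_one_add_aseq_add_two n
    have : 2 ^ (n + 2) = 2 * 2 ^ (n + 1) := by ring
    have : 2 ^ (n + 3) = 2 * 2 ^ (n + 2) := by ring
    have := Nat.one_le_two_pow (n := n)
    obtain ⟨j, rfl | rfl⟩ := Nat.even_or_odd' m
    · rw [show 2 ^ (n + 3) - 2 * j = 2 * (2 ^ (n + 2) - j) by omega,
        show 2 ^ (n + 2) - 2 * j = 2 * (2 ^ (n + 1) - j) by omega]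
      exact natDegree_sternDiff_two_mul_le (by omega) (ih _ (by omega))
    · rw [show 2 ^ (n + 3) - (2 * j + 1) = 2 * (2 ^ (n + 2) - (j + 1)) + 1 by omega,
        show 2 ^ (n + 2) - (2 * j + 1) = 2 * (2 ^ (n + 1) - (j + 1)) + 1 by omega]
      refine natDegree_sternDiff_two_mul_add_one_le (ih _ (by omega)) ?_
      rw [show 2 ^ (n + 2) - (j + 1) + 1 = 2 ^ (n + 2) - j by omega,
        show 2 ^ (n + 1) - (j + 1) + 1 = 2 ^ (n + 1) - j by omega]
      exact ih _ (by omega)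

lemma natDegree_sternP_two_pow_sub_aseq_add_one (n : ℕ) :
    (sternP (2 ^ (n + 1) - aseq (n + 1) + 1)).natDegree
      = (sternP (2 ^ (n + 1) - aseq (n + 1))).natDegree + (n + 1) % 2 := by
  induction n with
  | zero => exact natDegree_sternP_two_mul one_ne_zero
  | succ n ih =>
    show (sternP (2 ^ (n + 2) - aseq (n + 2) + 1)).natDegree
      = (sternP (2 ^ (n + 2) - aseq (n + 2))).natDegree + (n + 2) % 2
    have := aseq_add_two_add_mod_two n
    have := aseq_add_one_add_aseq_add_two n
    have : 2 ^ (n + 2) = 2 * 2 ^ (n + 1) := by ring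
    have hc : 2 ^ (n + 1) - aseq (n + 1) ≠ 0 := by omega
    rcases Nat.mod_two_eq_zero_or_one n with hn | hn
    · rw [show 2 ^ (n + 2) - aseq (n + 2) = 2 * (2 ^ (n + 1) - aseq (n + 1)) by omega,
        natDegree_sternP_two_mul_add_one, natDegree_sternP_two_mul hc, ih]
      omega
    · rw [show 2 ^ (n + 2) - aseq (n + 2) = 2 * (2 ^ (n + 1) - aseq (n + 1)) + 1 by omega,
        show 2 * (2 ^ (n + 1) - aseq (n + 1)) + 1 + 1
          = 2 * (2 ^ (n + 1) - aseq (n + 1) + 1) by ring,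
        natDegree_sternP_two_mul_add_one, natDegree_sternP_two_mul (by omega), ih]
      omega

lemma natDegree_sternP_two_pow_add_aseq_le_succ (n : ℕ)
    (hdiff : ∀ m < aseq (n + 1), (sternDiff (2 ^ (n + 2) + m) (2 ^ (n + 1) - m)).natDegree
      ≤ (sternP (2 ^ (n + 1) - m)).natDegree)
    (htop : (sternP (2 ^ (n + 2) + aseq (n + 1))).natDegree
      ≤ (sternP (2 ^ (n + 1) - aseq (n + 1))).natDegree + 1) :
    (sternP (2 ^ (n + 3) + aseq (n + 2))).natDegree
      ≤ (sternP (2 ^ (n + 2) - aseq (n + 2))).natDegree + 1 := by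
  have := aseq_add_two_add_mod_two n
  have := aseq_add_one_add_aseq_add_two n
  have : 2 ^ (n + 2) = 2 * 2 ^ (n + 1) := by ring
  have : 2 ^ (n + 3) = 2 * 2 ^ (n + 2) := by ring
  have := Nat.one_le_two_pow (n := n)
  rcases Nat.mod_two_eq_zero_or_one n with hn | hn
  · rw [show 2 ^ (n + 3) + aseq (n + 2) = 2 * (2 ^ (n + 2) + aseq (n + 1)) by omega,
      show 2 ^ (n + 2) - aseq (n + 2) = 2 * (2 ^ (n + 1) - aseq (n + 1)) by omega,
      natDegree_sternP_two_mul (by omega), natDegree_sternP_two_mul (by omega)]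
    omega
  · rw [show 2 ^ (n + 3) + aseq (n + 2) = 2 * (2 ^ (n + 2) + (aseq (n + 1) - 1)) + 1 by omega,
      show 2 ^ (n + 2) - aseq (n + 2) = 2 * (2 ^ (n + 1) - aseq (n + 1)) + 1 by omega,
      natDegree_sternP_two_mul_add_one, natDegree_sternP_two_mul_add_one,
      show 2 ^ (n + 2) + (aseq (n + 1) - 1) + 1 = 2 ^ (n + 2) + aseq (n + 1) by omega,
      show 2 ^ (n + 1) - aseq (n + 1) + 1 = 2 ^ (n + 1) - (aseq (n + 1) - 1) by omega]
    have := natDegree_sternP_le_natDegree_sternDiff (2 ^ (n + 2) + (aseq (n + 1) - 1))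
      (2 ^ (n + 1) - (aseq (n + 1) - 1))
    have := hdiff (aseq (n + 1) - 1) (by omega)
    omega

lemma natDegree_sternDiff_two_pow_add_le_succ (n : ℕ)
    (hdiff : ∀ m < aseq (n + 1), (sternDiff (2 ^ (n + 2) + m) (2 ^ (n + 1) - m)).natDegree
      ≤ (sternP (2 ^ (n + 1) - m)).natDegree)
    (htop : (sternP (2 ^ (n + 2) + aseq (n + 1))).natDegree
      ≤ (sternP (2 ^ (n + 1) - aseq (n + 1))).natDegree + 1) :
    ∀ m < aseq (n + 2), (sternDiff (2 ^ (n + 3) + m) (2 ^ (n + 2) - m)).natDegree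
      ≤ (sternP (2 ^ (n + 2) - m)).natDegree := by
  intro m hm
  have := aseq_add_two_add_mod_two n
  have := aseq_add_one_add_aseq_add_two n
  have : 2 ^ (n + 2) = 2 * 2 ^ (n + 1) := by ring
  have : 2 ^ (n + 3) = 2 * 2 ^ (n + 2) := by ring
  have := Nat.one_le_two_pow (n := n)
  obtain ⟨j, rfl | rfl⟩ := Nat.even_or_odd' m
  · rw [show 2 ^ (n + 3) + 2 * j = 2 * (2 ^ (n + 2) + j) by omega,
      show 2 ^ (n + 2) - 2 * j = 2 * (2 ^ (n + 1) - j) by omega]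
    exact natDegree_sternDiff_two_mul_le (by omega) (hdiff j (by omega))
  · rw [show 2 ^ (n + 3) + (2 * j + 1) = 2 * (2 ^ (n + 2) + j) + 1 by omega,
      show 2 ^ (n + 2) - (2 * j + 1) = 2 * (2 ^ (n + 1) - (j + 1)) + 1 by omega,
      sternDiff_two_mul_add_one_eq_add_swap, natDegree_sternP_two_mul_add_one,
      show 2 ^ (n + 1) - (j + 1) + 1 = 2 ^ (n + 1) - j by omega]
    have h₀ := hdiff j (by omega)
    have h₁ : (sternDiff (2 ^ (n + 2) + j + 1) (2 ^ (n + 1) - (j + 1))).natDegree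
        ≤ max (sternP (2 ^ (n + 1) - (j + 1))).natDegree
            (sternP (2 ^ (n + 1) - j)).natDegree := by
      rcases Nat.lt_or_ge (j + 1) (aseq (n + 1)) with hj | hj
      · exact (hdiff (j + 1) hj).trans (le_max_left _ _)
      · -- `j + 1 = aseq (n + 1)`: use the jump of `deg B` after `2 ^ (n + 1) - aseq (n + 1)`.
        have hn : n % 2 = 0 := by omega
        have hj : j + 1 = aseq (n + 1) := by omega
        have hjump := natDegree_sternP_two_pow_sub_aseq_add_one n
        have := natDegree_sternDiff_le (2 ^ (n + 2) + aseq (n + 1)) (2 ^ (n + 1) - aseq (n + 1))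
        rw [show 2 ^ (n + 1) - j = 2 ^ (n + 1) - aseq (n + 1) + 1 by omega,
          show 2 ^ (n + 2) + j + 1 = 2 ^ (n + 2) + aseq (n + 1) by omega, hj]
        omega
    exact (natDegree_add_le _ _).trans (max_le (h₀.trans (le_max_right _ _)) h₁)

lemma natDegree_sternDiff_two_pow_add_le_and_natDegree_sternP_two_pow_add_aseq_le (n : ℕ) :
    (∀ m < aseq (n + 1), (sternDiff (2 ^ (n + 2) + m) (2 ^ (n + 1) - m)).natDegree
      ≤ (sternP (2 ^ (n + 1) - m)).natDegree) ∧
    (sternP (2 ^ (n + 2) + aseq (n + 1))).natDegree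
      ≤ (sternP (2 ^ (n + 1) - aseq (n + 1))).natDegree + 1 := by
  induction n with
  | zero =>
    refine ⟨fun m (hm : m < 1) => ?_, ?_⟩
    · obtain rfl : m = 0 := by omega
      simpa using natDegree_sternDiff_two_pow_sub_le 0 0 (Nat.zero_le _)
    · show (sternP 5).natDegree ≤ (sternP 1).natDegree + 1
      have d2 := natDegree_sternP_two_mul (n := 1) one_ne_zero
      have d3 := natDegree_sternP_two_mul_add_one 1
      have d5 := natDegree_sternP_two_mul_add_one 2
      norm_num at d2 d3 d5
      omega
  | succ n ih =>
    exact ⟨natDegree_sternDiff_two_pow_add_le_succ n ih.1 ih.2,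
      natDegree_sternP_two_pow_add_aseq_le_succ n ih.1 ih.2⟩

theorem stern_lc_B (k u : ℕ) (hk : 3 ≤ k)
    (hu : u ≤ 2 ^ (k - 1) - (2 ^ (k - 1) - aseq (k - 2) + 1)) :
    (sternP (2 ^ (k - 1) - aseq (k - 2) + 1 + u)).leadingCoeff
      = (sternP (aseq (k - 1) + u)).leadingCoeff ∧
    (sternP (2 ^ k - (2 ^ (k - 1) - aseq (k - 2) + 1 + u))).leadingCoeff
      = (sternP (aseq (k - 1) + u)).leadingCoeff := by
  obtain ⟨n, rfl⟩ : ∃ n, k = n + 3 := ⟨k - 3, by omega⟩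
  replace hu : u ≤ 2 ^ (n + 2) - (2 ^ (n + 2) - aseq (n + 1) + 1) := hu
  show (sternP (2 ^ (n + 2) - aseq (n + 1) + 1 + u)).leadingCoeff
      = (sternP (aseq (n + 2) + u)).leadingCoeff ∧
    (sternP (2 ^ (n + 3) - (2 ^ (n + 2) - aseq (n + 1) + 1 + u))).leadingCoeff
      = (sternP (aseq (n + 2) + u)).leadingCoeff
  have := aseq_add_two_add_mod_two n
  have := aseq_add_one_add_aseq_add_two n
  have : 2 ^ (n + 2) = 2 * 2 ^ (n + 1) := by ring
  have : 2 ^ (n + 3) = 2 * 2 ^ (n + 2) := by ring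
  obtain ⟨m, hm⟩ : ∃ m, u + m + 1 = aseq (n + 1) := ⟨aseq (n + 1) - 1 - u, by omega⟩
  rw [show 2 ^ (n + 2) - aseq (n + 1) + 1 + u = 2 ^ (n + 2) - m by omega,
    show 2 ^ (n + 3) - (2 ^ (n + 2) - m) = 2 ^ (n + 2) + m by omega,
    show aseq (n + 2) + u = 2 ^ (n + 1) - m by omega]
  exact ⟨leadingCoeff_sternP_eq_of_natDegree_sternDiff_le (by omega)
      (natDegree_sternDiff_two_pow_sub_le n m (by omega)),
    leadingCoeff_sternP_eq_of_natDegree_sternDiff_le (by omega)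
      ((natDegree_sternDiff_two_pow_add_le_and_natDegree_sternP_two_pow_add_aseq_le n).1 m
        (by omega))⟩
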